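/- arXiv:math/9810047 — 7 statements merged into one kernel-verified Lean document; each statement's English description precedes it below -/
import Mathlib

section
/- For every natural number n ≥ 0 and every real x, (2·√2/√(2π)) · ∫_ℝ fₙ(√2·x − y) · exp(−y²/2) dy = 2^{1−n/2} · fₙ(x), where fₙ denotes the n-th derivative of x ↦ exp(−x²/2). In other words, the signed measure with density fₙ is an eigenfunction of the linearization DTν = 2(ν ∗ χ) ∘ S_{1/√2} of the central limit operator at the standard Gaussian χ, with eigenvalue 2^{1−n/2}. -/
open MeasureTheory Real

/-- `gaussDeriv n` is the `n`-th derivative of `x ↦ exp (-x²/2)`; it equals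
`e^{-x²/2} Hₙ(x)`, a multiple of a Hermite polynomial times the Gaussian. -/
noncomputable def gaussDeriv (n : ℕ) : ℝ → ℝ :=
  iteratedDeriv n (fun x : ℝ => Real.exp (-(x ^ 2) / 2))

/-! Write `g y = exp (-y²/2)` and `Fₙ z = ∫ fₙ (z - y) g y dy`. Every `fₙ` is a polynomial times
the Gaussian, hence bounded, so differentiation passes under the integral and `Fₙ` is the `n`-th
derivative of `F₀`. Completing the square gives `F₀ z = √π · g (z/√2)`, so by the chain rule
`Fₙ z = √π · 2^{-n/2} · fₙ (z/√2)`; evaluating at `z = √2 x` yields the eigenvalue `2^{1-n/2}`. -/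

open Filter Polynomial Topology Bornology
open scoped ContDiff

theorem iteratedDeriv_eq_of_hasDerivAt_succ {𝕜 E : Type*} [NontriviallyNormedField 𝕜]
    [NormedAddCommGroup E] [NormedSpace 𝕜 E] {F : ℕ → 𝕜 → E}
    (hF : ∀ n x, HasDerivAt (F n) (F (n + 1) x) x) (n : ℕ) :
    iteratedDeriv n (F 0) = F n := by
  induction n with
  | zero => exact iteratedDeriv_zero
  | succ n ih => exact funext fun x => by rw [iteratedDeriv_succ, ih, (hF n x).deriv]

theorem hasDerivAt_integral_comp_sub_mul {f f' g : ℝ → ℝ} {C C' : ℝ}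
    (hf : ∀ x, HasDerivAt f (f' x) x) (hfC : ∀ x, |f x| ≤ C) (hf'C : ∀ x, |f' x| ≤ C')
    (hg : Integrable g) (z : ℝ) :
    HasDerivAt (fun z => ∫ y, f (z - y) * g y) (∫ y, f' (z - y) * g y) z := by
  have hf_cont : Continuous f := continuous_iff_continuousAt.2 fun x => (hf x).continuousAt
  have hf'_meas : Measurable f' := by
    rw [show f' = deriv f from funext fun x => (hf x).deriv.symm]
    exact measurable_deriv f
  have hf_shift (z : ℝ) : AEStronglyMeasurable fun y => f (z - y) :=
    (hf_cont.comp (continuous_sub_left z)).aestronglyMeasurable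
  refine (hasDerivAt_integral_of_dominated_loc_of_deriv_le (bound := fun y => C' * |g y|)
    (F := fun z y => f (z - y) * g y) (F' := fun z y => f' (z - y) * g y)
    univ_mem (.of_forall fun z => (hf_shift z).mul hg.aestronglyMeasurable)
    (hg.bdd_mul (hf_shift z) (.of_forall fun y => by simpa using hfC _))
    ((hf'_meas.comp (measurable_const.sub measurable_id)).aestronglyMeasurable.mul
      hg.aestronglyMeasurable)
    (.of_forall fun y x _ => ?_) (hg.abs.const_mul C') (.of_forall fun y x _ => ?_)).2
  · rw [norm_mul, Real.norm_eq_abs, Real.norm_eq_abs]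
    exact mul_le_mul_of_nonneg_right (hf'C _) (abs_nonneg _)
  · simpa using ((hf (x - y)).comp x ((hasDerivAt_id x).sub_const y)).mul_const (g y)

theorem contDiff_exp_neg_sq_div_two : ContDiff ℝ ∞ fun x : ℝ => exp (-(x ^ 2) / 2) := by
  fun_prop

theorem hasDerivAt_gaussDeriv (n : ℕ) (x : ℝ) :
    HasDerivAt (gaussDeriv n) (gaussDeriv (n + 1) x) x := by
  rw [gaussDeriv, gaussDeriv, iteratedDeriv_succ]
  exact (contDiff_exp_neg_sq_div_two.differentiable_iteratedDeriv n
    (WithTop.coe_lt_coe.2 (ENat.natCast_lt_top n)) x).hasDerivAt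

theorem gaussDeriv_eq_hermite (n : ℕ) (x : ℝ) :
    gaussDeriv n x = (-1) ^ n * aeval x (hermite n) * exp (-(x ^ 2) / 2) := by
  simpa only [gaussDeriv, iteratedDeriv_eq_iterate, neg_div] using
    deriv_gaussian_eq_hermite_mul_gaussian n x

theorem tendsto_eval_mul_exp_neg_sq_div_two_cocompact (P : ℝ[X]) :
    Tendsto (fun x => P.eval x * exp (-(x ^ 2) / 2)) (cocompact ℝ) (𝓝 0) := by
  induction P using Polynomial.induction_on' with
  | add p q hp hq => simpa only [eval_add, add_mul, add_zero] using hp.add hq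
  | monomial k c =>
    rw [tendsto_zero_iff_norm_tendsto_zero]
    have hk := tendsto_rpow_abs_mul_exp_neg_mul_sq_cocompact (a := 1 / 2) (by norm_num) k
    convert hk.const_mul |c| using 2 with x
    · rw [eval_monomial, norm_mul, norm_mul, norm_pow, Real.norm_eq_abs, Real.norm_eq_abs,
        Real.norm_eq_abs, abs_exp, rpow_natCast]
      ring_nf
    · simp

theorem exists_abs_gaussDeriv_le (n : ℕ) : ∃ C, ∀ x, |gaussDeriv n x| ≤ C := by
  have hlim : Tendsto (gaussDeriv n) (cocompact ℝ) (𝓝 0) := by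
    convert tendsto_eval_mul_exp_neg_sq_div_two_cocompact
      ((-1) ^ n * (hermite n).map (Int.castRingHom ℝ)) using 1 with x
    ext x
    simp [gaussDeriv_eq_hermite, aeval_def, eval₂_eq_eval_map]
  obtain ⟨C, hC⟩ := isBounded_iff_forall_norm_le.1
    (hlim.isCompact_insert_range_of_cocompact
      (continuous_iff_continuousAt.2 fun x => (hasDerivAt_gaussDeriv n x).continuousAt)).isBounded
  exact ⟨C, fun x => hC _ (Set.mem_insert_of_mem _ ⟨x, rfl⟩)⟩

theorem integrable_exp_neg_sq_div_two : Integrable fun y : ℝ => exp (-(y ^ 2) / 2) := by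
  simpa [neg_div, div_eq_inv_mul] using integrable_exp_neg_mul_sq (b := 2⁻¹) (by norm_num)

theorem integral_exp_neg_sq_div_two_comp_sub_mul (z : ℝ) :
    ∫ y, exp (-((z - y) ^ 2) / 2) * exp (-(y ^ 2) / 2) =
      √π * exp (-(((√2)⁻¹ * z) ^ 2) / 2) := by
  -- completing the square in `y`
  have hsq (y : ℝ) : -((z - y) ^ 2) / 2 + -(y ^ 2) / 2 =
      -(((√2)⁻¹ * z) ^ 2) / 2 + -1 * (y - z / 2) ^ 2 := by
    rw [mul_pow, inv_pow, sq_sqrt zero_le_two]; ring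
  simp_rw [← exp_add, hsq, exp_add]
  rw [integral_const_mul, integral_sub_right_eq_self (fun y => exp (-1 * y ^ 2)),
    integral_gaussian, div_one, mul_comm]

theorem integral_gaussDeriv_comp_sub_mul_exp (n : ℕ) (z : ℝ) :
    ∫ y, gaussDeriv n (z - y) * exp (-(y ^ 2) / 2) =
      √π * (√2)⁻¹ ^ n * gaussDeriv n ((√2)⁻¹ * z) := by
  set F : ℕ → ℝ → ℝ := fun n z => ∫ y, gaussDeriv n (z - y) * exp (-(y ^ 2) / 2)
  have hF (n : ℕ) (z : ℝ) : HasDerivAt (F n) (F (n + 1) z) z := by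
    obtain ⟨C, hC⟩ := exists_abs_gaussDeriv_le n
    obtain ⟨C', hC'⟩ := exists_abs_gaussDeriv_le (n + 1)
    exact hasDerivAt_integral_comp_sub_mul (hasDerivAt_gaussDeriv n) hC hC'
      integrable_exp_neg_sq_div_two z
  have hF0 : F 0 = fun z => √π * exp (-(((√2)⁻¹ * z) ^ 2) / 2) := funext fun z => by
    simp only [F, gaussDeriv, iteratedDeriv_zero]
    exact integral_exp_neg_sq_div_two_comp_sub_mul z
  show F n z = _
  rw [← iteratedDeriv_eq_of_hasDerivAt_succ hF, hF0, iteratedDeriv_const_mul_field,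
    iteratedDeriv_comp_const_mul (contDiff_infty.1 contDiff_exp_neg_sq_div_two n),
    mul_assoc]
  rfl

/-- The density `fₙ` of the signed measure `νₙ = fₙ dx` is an eigenfunction of the
linearization `DT ν = 2 (ν ∗ χ) ∘ S_{1/√2}` of the central limit operator at the
standard Gaussian `χ`, with eigenvalue `2^{1 - n/2}`:
`(2√2/√(2π)) ∫ fₙ(√2·x − y) e^{−y²/2} dy = 2^{1−n/2} fₙ(x)`. -/
theorem gaussDeriv_eigenfunction (n : ℕ) (x : ℝ) :
    (2 * Real.sqrt 2 / Real.sqrt (2 * Real.pi)) *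
      ∫ y : ℝ, gaussDeriv n (Real.sqrt 2 * x - y) * Real.exp (-(y ^ 2) / 2) =
    (2 : ℝ) ^ ((1 : ℝ) - (n : ℝ) / 2) * gaussDeriv n x := by
  have hsqrt2 : √2 ≠ 0 := by positivity
  rw [integral_gaussDeriv_comp_sub_mul_exp, inv_mul_cancel_left₀ hsqrt2,
    rpow_sub two_pos, rpow_one, rpow_div_two_eq_sqrt _ zero_le_two, rpow_natCast,
    sqrt_mul zero_le_two, inv_pow]
  field_simp
end

section
/- For all integers n, m ≥ 1 and every natural number t, the following identity holds in ℚ: ∑_{k+l=t, k,l ≥ 0} (n/(n+2k)) · C(n+2k, k) · (m/(m+2l)) · C(m+2l, l) = ((n+m)/(n+m+2t)) · C(n+m+2t, t). (This is a particular case of the generalized Vandermonde, or Rothe, identity.) -/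
/-!
The ballot numbers `b n t = n/(n+2t) C(n+2t,t)` satisfy `b n 0 = 1` and the Pascal-type
recurrence `b (n+1) (t+1) = b n (t+1) + b (n+2) t`. The convolution `∑_{k+l=t} b n k * b m l`
satisfies the same recurrence in `n`, so induction on `t` and then on `n` identifies it with
`b (n+m) t`.
-/

open Finset

-- At `n = t = 0` the division by zero makes this `0` rather than the combinatorial value `1`.
def ballotNum (n t : ℕ) : ℚ := n / (n + 2 * t) * (n + 2 * t).choose t

theorem ballotNum_zero {n : ℕ} (hn : n ≠ 0) : ballotNum n 0 = 1 := by
  simp [ballotNum, hn]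

theorem ballotNum_zero_succ (t : ℕ) : ballotNum 0 (t + 1) = 0 := by
  simp [ballotNum]

theorem ballotNum_succ_succ (n t : ℕ) :
    ballotNum (n + 1) (t + 1) = ballotNum n (t + 1) + ballotNum (n + 2) t := by
  set N := n + 2 * t + 2
  have hN : N - t = n + t + 2 := by omega
  have hchoose : (N.choose (t + 1) : ℚ) = N.choose t * (n + t + 2) / (t + 1) := by
    rw [eq_div_iff (by positivity)]
    exact_mod_cast hN ▸ Nat.choose_succ_right_eq N t
  have hchoose_succ : ((N + 1).choose (t + 1) : ℚ) = N.choose t * (N + 1) / (t + 1) := by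
    rw [eq_div_iff (by positivity)]
    exact_mod_cast (Nat.add_one_mul_choose_eq N t).symm.trans (mul_comm _ _)
  simp only [ballotNum]
  rw [show n + 1 + 2 * (t + 1) = N + 1 by omega, show n + 2 * (t + 1) = N by omega,
    show n + 2 + 2 * t = N by omega, hchoose, hchoose_succ]
  push_cast [N]
  field_simp
  ring

def ballotConv (n m t : ℕ) : ℚ := ∑ p ∈ antidiagonal t, ballotNum n p.1 * ballotNum m p.2

theorem ballotConv_zero {n m : ℕ} (hn : n ≠ 0) (hm : m ≠ 0) : ballotConv n m 0 = 1 := by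
  simp [ballotConv, ballotNum_zero hn, ballotNum_zero hm]

theorem ballotConv_one_succ (m t : ℕ) :
    ballotConv 1 m (t + 1) = ballotNum m (t + 1) + ballotConv 2 m t := by
  simp [ballotConv, Nat.sum_antidiagonal_succ, ballotNum_succ_succ 0, ballotNum_zero_succ,
    ballotNum_zero]

theorem ballotConv_succ_succ {n : ℕ} (hn : n ≠ 0) (m t : ℕ) :
    ballotConv (n + 1) m (t + 1) = ballotConv n m (t + 1) + ballotConv (n + 2) m t := by
  simp only [ballotConv, Nat.sum_antidiagonal_succ, ballotNum_succ_succ, add_mul,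
    sum_add_distrib, ballotNum_zero hn, ballotNum_zero n.succ_ne_zero]
  ring

theorem ballotConv_eq_ballotNum_add {n m : ℕ} (hn : n ≠ 0) (hm : m ≠ 0) (t : ℕ) :
    ballotConv n m t = ballotNum (n + m) t := by
  induction t generalizing n with
  | zero => rw [ballotConv_zero hn hm, ballotNum_zero (by omega)]
  | succ t ih =>
    induction n, Nat.one_le_iff_ne_zero.2 hn using Nat.le_induction with
    | base =>
      rw [ballotConv_one_succ, ih two_ne_zero, add_comm 1, ballotNum_succ_succ, add_comm m]
    | succ n hn ihn =>
      rw [ballotConv_succ_succ (by omega), ihn (by omega), ih (by omega),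
        show n + 1 + m = n + m + 1 by omega, ballotNum_succ_succ,
        show n + 2 + m = n + m + 2 by omega]

/-- A particular case of the generalized Vandermonde (Rothe) identity: for `n, m ≥ 1`
and `t ∈ ℕ`,
`∑_{k+l=t} (n/(n+2k)) C(n+2k,k) (m/(m+2l)) C(m+2l,l) = ((n+m)/(n+m+2t)) C(n+m+2t,t)`. -/
theorem rothe_identity (n m : ℕ) (hn : 1 ≤ n) (hm : 1 ≤ m) (t : ℕ) :
    ∑ p ∈ Finset.HasAntidiagonal.antidiagonal t,
        ((n : ℚ) / (n + 2 * p.1)) * ((n + 2 * p.1).choose p.1) *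
          (((m : ℚ) / (m + 2 * p.2)) * ((m + 2 * p.2).choose p.2)) =
      ((n + m : ℚ) / (n + m + 2 * t)) * ((n + m + 2 * t).choose t) := by
  simpa [ballotConv, ballotNum] using ballotConv_eq_ballotNum_add (n := n) (m := m)
    (by omega) (by omega) t
end

section
/- For every integer n ≥ 1 and every real z with z > 2, the series ∑_{k=0}^∞ (1/(n+2k)) · C(n+2k, k) · z^{−(n+2k)} converges absolutely and equals (1/n) · ((z − √(z²−4))/2)^n. -/
/-!
Put `x = w / (1 + w²)` with `|w| < 1`. The series `B_m = ∑ₖ C(m+2k,k) x^(m+2k)` satisfy Pascal's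
recurrence `B_{m+1} = x (B_m + B_{m+2})` and tend to `0`; as `w` is the small root of the
characteristic equation, this forces `B_m = B_0 w^m`, and `B_0 = 1 + 2x B_1` gives
`B_0 = (1 + w²)/(1 - w²)`. The ballot identity
`n/(n+2k) C(n+2k,k) = C(n+2k-1,k) - C(n+2k-1,k-1)` telescopes the series into
`n ∑ₖ 1/(n+2k) C(n+2k,k) x^(n+2k) = x (B_{n-1} - B_{n+1}) = w^n`.
Finally `z⁻¹ = w / (1 + w²)` for `w = (z - √(z² - 4))/2`.
-/

open Filter Topology

theorem HasSum.of_succ_eq_add {G : Type*} [AddCommGroup G] [TopologicalSpace G]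
    [IsTopologicalAddGroup G] {f g h : ℕ → G} {a b : G} (hg : HasSum g a) (hh : HasSum h b)
    (h0 : f 0 = g 0) (hsucc : ∀ k, f (k + 1) = g (k + 1) + h k) : HasSum f (a + b) := by
  refine (hasSum_nat_add_iff' 1).1 ?_
  have := ((hasSum_nat_add_iff' 1).2 hg).add hh
  simpa [h0, hsucc, sub_add_eq_add_sub] using this

noncomputable def chooseTerm (x : ℝ) (m k : ℕ) : ℝ :=
  (m + 2 * k).choose k * x ^ (m + 2 * k)

noncomputable def chooseSeries (x : ℝ) (m : ℕ) : ℝ :=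
  ∑' k, chooseTerm x m k

section chooseSeries

variable {x : ℝ}

theorem abs_chooseTerm_le (x : ℝ) (m k : ℕ) :
    |chooseTerm x m k| ≤ (2 * |x|) ^ m * ((2 * |x|) ^ 2) ^ k := by
  have hchoose : ((m + 2 * k).choose k : ℝ) ≤ 2 ^ (m + 2 * k) := by
    exact_mod_cast Nat.choose_le_two_pow _ _
  calc |chooseTerm x m k| = (m + 2 * k).choose k * |x| ^ (m + 2 * k) := by
        simp [chooseTerm, abs_mul, abs_pow]
    _ ≤ 2 ^ (m + 2 * k) * |x| ^ (m + 2 * k) := by gcongr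
    _ = (2 * |x|) ^ m * ((2 * |x|) ^ 2) ^ k := by rw [← mul_pow, pow_add, pow_mul]

theorem hasSum_chooseTerm_majorant (hx : |x| < 1 / 2) (m : ℕ) :
    HasSum (fun k : ℕ => (2 * |x|) ^ m * ((2 * |x|) ^ 2) ^ k)
      ((2 * |x|) ^ m * (1 - (2 * |x|) ^ 2)⁻¹) := by
  refine (hasSum_geometric_of_lt_one (by positivity) ?_).mul_left _
  nlinarith [abs_nonneg x]

theorem summable_chooseTerm (hx : |x| < 1 / 2) (m : ℕ) : Summable (chooseTerm x m) :=
  .of_norm_bounded (hasSum_chooseTerm_majorant hx m).summable (abs_chooseTerm_le x m)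

theorem tendsto_chooseSeries_atTop (hx : |x| < 1 / 2) :
    Tendsto (chooseSeries x) atTop (𝓝 0) := by
  have hbound (m : ℕ) : |chooseSeries x m| ≤ (2 * |x|) ^ m * (1 - (2 * |x|) ^ 2)⁻¹ :=
    tsum_of_norm_bounded (f := chooseTerm x m) (hasSum_chooseTerm_majorant hx m)
      (abs_chooseTerm_le x m)
  have hlim : Tendsto (fun m : ℕ => (2 * |x|) ^ m * (1 - (2 * |x|) ^ 2)⁻¹) atTop (𝓝 0) := by
    simpa using (tendsto_pow_atTop_nhds_zero_of_lt_one (r := 2 * |x|) (by positivity)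
      (by linarith [abs_nonneg x])).mul_const (1 - (2 * |x|) ^ 2)⁻¹
  exact squeeze_zero_norm hbound hlim

theorem chooseSeries_succ (hx : |x| < 1 / 2) (m : ℕ) :
    chooseSeries x (m + 1) = x * chooseSeries x m + x * chooseSeries x (m + 2) := by
  refine (HasSum.of_succ_eq_add ((summable_chooseTerm hx m).hasSum.mul_left x)
    ((summable_chooseTerm hx (m + 2)).hasSum.mul_left x) ?_ fun k => ?_).tsum_eq
  · simp only [chooseTerm, mul_zero, add_zero, Nat.choose_zero_right, Nat.cast_one, pow_succ,
      one_mul]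
    ring
  · simp only [chooseTerm]
    rw [show m + 1 + 2 * (k + 1) = (m + 2 * k + 2) + 1 by ring, Nat.choose_succ_succ',
      show m + 2 * (k + 1) = m + 2 * k + 2 by ring, show m + 2 + 2 * k = m + 2 * k + 2 by ring]
    push_cast
    ring

theorem chooseSeries_zero (hx : |x| < 1 / 2) :
    chooseSeries x 0 = 1 + 2 * x * chooseSeries x 1 := by
  refine (HasSum.of_succ_eq_add (hasSum_ite_eq 0 1)
    ((summable_chooseTerm hx 1).hasSum.mul_left (2 * x)) (by simp [chooseTerm]) fun k => ?_).tsum_eq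
  have hcentral : (2 * k + 2).choose (k + 1) = 2 * (2 * k + 1).choose k := by
    rw [Nat.choose_succ_succ', Nat.choose_symm_half]; ring
  simp only [chooseTerm, Nat.add_eq_zero_iff, one_ne_zero, and_false, if_false, zero_add,
    show 2 * (k + 1) = 2 * k + 2 by ring, hcentral, add_comm 1 (2 * k)]
  push_cast
  ring

end chooseSeries

theorem eq_pow_mul_of_recurrence {w : ℝ} (hw : |w| < 1) {u : ℕ → ℝ}
    (hrec : ∀ j, (1 + w ^ 2) * u (j + 1) = w * u j + w * u (j + 2))
    (hu : Tendsto u atTop (𝓝 0)) (j : ℕ) : u j = w ^ j * u 0 := by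
  set F : ℕ → ℝ := fun j => u (j + 1) - w * u j
  have hF (j : ℕ) : F j = w * F (j + 1) := by simp only [F]; linear_combination hrec j
  have hFpow (j m : ℕ) : F j = w ^ m * F (m + j) := by
    induction m with
    | zero => simp
    | succ m ih => rw [ih, hF, pow_succ, mul_assoc, add_right_comm]
  have hF_zero (j : ℕ) : F j = 0 := by
    have hFlim : Tendsto F atTop (𝓝 0) := by
      simpa using (hu.comp (tendsto_add_atTop_nat 1)).sub (hu.const_mul w)
    have hlim : Tendsto (fun m => w ^ m * F (m + j)) atTop (𝓝 0) := by
      simpa using (tendsto_pow_atTop_nhds_zero_of_abs_lt_one hw).mul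
        (hFlim.comp (tendsto_add_atTop_nat j))
    exact tendsto_nhds_unique (by simp only [← hFpow]; exact tendsto_const_nhds) hlim
  induction j with
  | zero => simp
  | succ j ih => rw [pow_succ]; linear_combination hF_zero j + w * ih

theorem abs_div_one_add_sq_lt_half {w : ℝ} (hw : |w| < 1) : |w / (1 + w ^ 2)| < 1 / 2 := by
  rw [abs_div, abs_of_pos (by positivity : (0 : ℝ) < 1 + w ^ 2), div_lt_iff₀ (by positivity),
    ← sq_abs w]
  nlinarith [abs_nonneg w]

theorem chooseSeries_div_one_add_sq {w : ℝ} (hw : |w| < 1) (m : ℕ) :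
    chooseSeries (w / (1 + w ^ 2)) m = (1 + w ^ 2) / (1 - w ^ 2) * w ^ m := by
  have hx := abs_div_one_add_sq_lt_half hw
  have hpow := eq_pow_mul_of_recurrence hw
    (fun j => by rw [chooseSeries_succ hx j]; field_simp) (tendsto_chooseSeries_atTop hx)
  have h0 := chooseSeries_zero hx
  have hw2 : 1 - w ^ 2 ≠ 0 := by nlinarith [sq_abs w, abs_nonneg w]
  rw [hpow 1] at h0
  rw [hpow m]
  field_simp at h0 ⊢
  linear_combination w ^ m * h0

theorem choose_ballot (m k : ℕ) :
    (m + 2 * k + 3) * (m + 2 * k + 2).choose k + (m + 1) * (m + 2 * k + 3).choose (k + 1) =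
      (m + 2 * k + 3) * (m + 2 * k + 2).choose (k + 1) := by
  have h1 := Nat.add_one_mul_choose_eq (m + 2 * k + 2) k
  have h2 := Nat.choose_mul_succ_eq (m + 2 * k + 2) (k + 1)
  rw [show m + 2 * k + 2 + 1 - (k + 1) = (m + 1) + (k + 1) by omega] at h2
  nlinarith [h1, h2]

theorem hasSum_one_div_mul_choose_mul_pow_succ {x : ℝ} (hx : |x| < 1 / 2) (m : ℕ) :
    HasSum (fun k : ℕ =>
      (1 / (m + 1 + 2 * k) : ℝ) * (m + 1 + 2 * k).choose k * x ^ (m + 1 + 2 * k))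
      ((x * chooseSeries x m - x * chooseSeries x (m + 2)) / (m + 1)) := by
  have hscaled : HasSum
      (fun k : ℕ => (m + 1) * ((1 / (m + 1 + 2 * k) : ℝ) * (m + 1 + 2 * k).choose k *
        x ^ (m + 1 + 2 * k)))
      (x * chooseSeries x m + -(x * chooseSeries x (m + 2))) := by
    refine HasSum.of_succ_eq_add ((summable_chooseTerm hx m).hasSum.mul_left x)
      ((summable_chooseTerm hx (m + 2)).hasSum.mul_left x).neg ?_ fun k => ?_
    · simp only [chooseTerm, mul_zero, add_zero, Nat.choose_zero_right, Nat.cast_zero,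
        Nat.cast_one]
      field_simp
      ring
    · have hballot := congrArg (Nat.cast : ℕ → ℝ) (choose_ballot m k)
      simp only [chooseTerm]
      rw [show m + 1 + 2 * (k + 1) = m + 2 * k + 3 by ring,
        show m + 2 * (k + 1) = m + 2 * k + 2 by ring, show m + 2 + 2 * k = m + 2 * k + 2 by ring]
      push_cast at hballot ⊢
      field_simp
      linear_combination x ^ (m + 2 * k + 3) * hballot
  rw [← sub_eq_add_neg] at hscaled
  simpa only [mul_div_cancel_left₀ _ (m.cast_add_one_ne_zero : (m : ℝ) + 1 ≠ 0)]
    using hscaled.div_const (m + 1)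

theorem hasSum_one_div_mul_choose_mul_pow {w : ℝ} (hw : |w| < 1) {n : ℕ} (hn : n ≠ 0) :
    HasSum (fun k : ℕ => (1 / (n + 2 * k) : ℝ) * (n + 2 * k).choose k *
      (w / (1 + w ^ 2)) ^ (n + 2 * k)) (w ^ n / n) := by
  obtain ⟨m, rfl⟩ := Nat.exists_eq_add_one_of_ne_zero hn
  have hw2 : 1 - w ^ 2 ≠ 0 := by nlinarith [sq_abs w, abs_nonneg w]
  convert hasSum_one_div_mul_choose_mul_pow_succ (abs_div_one_add_sq_lt_half hw) m using 1
  · push_cast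
    rfl
  · rw [chooseSeries_div_one_add_sq hw, chooseSeries_div_one_add_sq hw]
    push_cast
    field_simp
    ring

theorem abs_sub_sqrt_sq_sub_four_div_two_lt_one {z : ℝ} (hz : 2 < z) :
    |(z - √(z ^ 2 - 4)) / 2| < 1 := by
  have hsq := Real.sq_sqrt (by nlinarith : (0 : ℝ) ≤ z ^ 2 - 4)
  have hs := Real.sqrt_nonneg (z ^ 2 - 4)
  rw [abs_lt]
  constructor <;> nlinarith

theorem inv_eq_sub_sqrt_sq_sub_four_div {z : ℝ} (hz : 2 < z) :
    z⁻¹ = (z - √(z ^ 2 - 4)) / 2 / (1 + ((z - √(z ^ 2 - 4)) / 2) ^ 2) := by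
  have hsq := Real.sq_sqrt (by nlinarith : (0 : ℝ) ≤ z ^ 2 - 4)
  field_simp
  linear_combination hsq

/-- For `n ≥ 1` and `z > 2`, the series `∑ₖ (1/(n+2k)) C(n+2k,k) z^{−(n+2k)}`
converges absolutely and equals `(1/n) ((z − √(z²−4))/2)^n`. -/
theorem series_eigenfunction_antiderivative (n : ℕ) (hn : 1 ≤ n) (z : ℝ) (hz : 2 < z) :
    Summable (fun k : ℕ =>
      (1 / (n + 2 * k) : ℝ) * ((n + 2 * k).choose k) * z ^ (-((n : ℤ) + 2 * k))) ∧
    ∑' k : ℕ,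
        (1 / (n + 2 * k) : ℝ) * ((n + 2 * k).choose k) * z ^ (-((n : ℤ) + 2 * k)) =
      (1 / n : ℝ) * ((z - Real.sqrt (z ^ 2 - 4)) / 2) ^ n := by
  have hzpow (k : ℕ) : z ^ (-((n : ℤ) + 2 * k)) = z⁻¹ ^ (n + 2 * k) := by
    rw [zpow_neg, show (n : ℤ) + 2 * k = ((n + 2 * k : ℕ) : ℤ) by push_cast; ring, zpow_natCast,
      inv_pow]
  have h := hasSum_one_div_mul_choose_mul_pow (abs_sub_sqrt_sq_sub_four_div_two_lt_one hz)
    (n := n) (by omega)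
  simp only [hzpow, inv_eq_sub_sqrt_sq_sub_four_div hz]
  exact ⟨h.summable, by rw [h.tsum_eq, div_eq_inv_mul, one_div]⟩
end

section
/- For all natural numbers n and k: (1/π) · ∫_{−2}^{2} t^{n+2k} · Tₙ(t/2) / √(4 − t²) dt = C(n+2k, k), and (1/π) · ∫_{−2}^{2} t^{m} · Tₙ(t/2) / √(4 − t²) dt = 0 whenever m − n is odd or m < n. That is, the moment sequence of the measure with density 1_{[−2,2]}(t) · Tₙ(t/2)/(π√(4 − t²)) is given by the numbers a_{n+2k,n} = C(n+2k,k) counting noncrossing partitions of n+2k elements into one class of n elements and k pairs. -/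
open Polynomial intervalIntegral Real MeasureTheory Set

/-- auxiliary coefficient function -/
def chebMomCoeff (m nn : ℕ) : ℕ :=
  if nn ≤ m ∧ (m - nn) % 2 = 0 then m.choose ((m - nn) / 2) else 0

lemma chebMomCoeff_rec_zero (m : ℕ) : chebMomCoeff (m+1) 0 = 2 * chebMomCoeff m 1 := by
  unfold chebMomCoeff
  obtain ⟨j, rfl⟩ | ⟨j, rfl⟩ := Nat.even_or_odd m
  · rw [if_neg (by omega), if_neg (by omega)]
  · have c1 : 0 ≤ 2*j+1+1 ∧ (2*j+1+1-0) % 2 = 0 := by omega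
    have c2 : 1 ≤ 2*j+1 ∧ (2*j+1-1) % 2 = 0 := by omega
    rw [if_pos c1, if_pos c2]
    have h1 : (2*j+1+1-0)/2 = j+1 := by omega
    have h2 : (2*j+1-1)/2 = j := by omega
    rw [h1, h2]
    have h3 : 2*j+1+1 = (2*j+1)+1 := by omega
    rw [h3, Nat.choose_succ_succ (2*j+1) j]
    have h4 : (2*j+1).choose (j+1) = (2*j+1).choose j := by
      rw [← Nat.choose_symm (by omega : j ≤ 2*j+1)]
      congr 1; omega
    rw [h4]; ring

lemma chebMomCoeff_rec_succ (m nn : ℕ) :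
    chebMomCoeff (m+1) (nn+1) = chebMomCoeff m (nn+2) + chebMomCoeff m nn := by
  unfold chebMomCoeff
  by_cases h1 : nn ≤ m ∧ (m - nn) % 2 = 0
  · have c1 : nn+1 ≤ m+1 ∧ (m+1-(nn+1)) % 2 = 0 := by omega
    rw [if_pos c1, if_pos h1]
    by_cases h2 : nn + 2 ≤ m
    · have c2 : nn+2 ≤ m ∧ (m-(nn+2)) % 2 = 0 := by omega
      rw [if_pos c2]
      obtain ⟨k', hk'⟩ : ∃ k', (m-nn)/2 = k' + 1 := ⟨(m-nn)/2 - 1, by omega⟩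
      have e1 : (m+1-(nn+1))/2 = k' + 1 := by omega
      have e2 : (m - (nn+2))/2 = k' := by omega
      rw [e1, e2, hk', Nat.choose_succ_succ m k']
    · rw [if_neg (by omega)]
      have hm : m = nn := by omega
      subst hm
      simp
  · rw [if_neg (by omega), if_neg (by omega), if_neg (by omega)]


lemma cmc_zero : chebMomCoeff 0 0 = 1 := by simp [chebMomCoeff]

lemma cmc_zero' (j : ℕ) : chebMomCoeff 0 (j+1) = 0 := by simp [chebMomCoeff]

lemma cosPow_intble (p q : ℕ) :
    IntervalIntegrable (fun x => Real.cos x ^ p * Real.cos (q * x)) volume 0 π := by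
  apply Continuous.intervalIntegrable
  fun_prop

lemma cos_pow_integral (m : ℕ) : ∀ nn : ℕ,
    ∫ x in (0:ℝ)..π, Real.cos x ^ m * Real.cos (nn * x)
      = π / 2 ^ m * chebMomCoeff m nn := by
  induction m with
  | zero =>
    intro nn
    cases nn with
    | zero => simp [cmc_zero]
    | succ j =>
      rw [cmc_zero']
      have hc : ((j:ℝ)+1) ≠ 0 := by positivity
      have hfun : (fun x : ℝ => Real.cos ((j+1 : ℕ) * x))
          = fun x : ℝ => Real.cos (((j:ℝ)+1) * x) := by
        funext x; congr 1; push_cast; ring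
      have hs : Real.sin (((j:ℝ)+1) * π) = 0 := by
        rw [show ((j:ℝ)+1)*π = ((j+1 : ℕ) : ℝ) * π by push_cast; ring]
        exact Real.sin_nat_mul_pi _
      simp only [pow_zero, one_mul]
      rw [hfun, intervalIntegral.integral_comp_mul_left Real.cos hc]
      simp [hs]
  | succ m IH =>
    intro nn
    cases nn with
    | zero =>
      have heq : ∀ x ∈ Set.uIcc (0:ℝ) π,
          Real.cos x ^ (m+1) * Real.cos ((0:ℕ) * x)
            = Real.cos x ^ m * Real.cos ((1:ℕ) * x) := by
        intro x _; push_cast; simp [pow_succ]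
      rw [intervalIntegral.integral_congr heq, IH 1, chebMomCoeff_rec_zero]
      push_cast; ring
    | succ j =>
      have heq : ∀ x ∈ Set.uIcc (0:ℝ) π,
          Real.cos x ^ (m+1) * Real.cos ((j+1:ℕ) * x)
            = (Real.cos x ^ m * Real.cos ((j+2:ℕ) * x)
               + Real.cos x ^ m * Real.cos ((j:ℕ) * x)) / 2 := by
        intro x _
        have e1 : ((j:ℝ)+2)*x = ((j:ℝ)+1)*x + x := by ring
        have e2 : (j:ℝ)*x = ((j:ℝ)+1)*x - x := by ring
        push_cast
        rw [e1, e2, Real.cos_add, Real.cos_sub, pow_succ]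
        ring
      rw [intervalIntegral.integral_congr heq, intervalIntegral.integral_div,
        intervalIntegral.integral_add (cosPow_intble m (j+2)) (cosPow_intble m j),
        IH (j+2), IH j, chebMomCoeff_rec_succ]
      push_cast; ring

lemma cheb_cov (g : ℝ → ℝ) :
    ∫ t in (-2:ℝ)..2, g t / Real.sqrt (4 - t^2)
      = ∫ x in (0:ℝ)..π, g (2 * Real.cos x) := by
  have himg : (fun x : ℝ => 2 * Real.cos x) '' Ioo 0 π = Ioo (-2:ℝ) 2 := by
    ext t
    constructor
    · rintro ⟨θ, hθ, rfl⟩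
      have h1 : Real.cos θ < 1 := by
        have := Real.strictAntiOn_cos (left_mem_Icc.2 Real.pi_pos.le)
          ⟨hθ.1.le, hθ.2.le⟩ hθ.1
        simpa using this
      have h2 : -1 < Real.cos θ := by
        have := Real.strictAntiOn_cos ⟨hθ.1.le, hθ.2.le⟩
          (right_mem_Icc.2 Real.pi_pos.le) hθ.2
        simpa using this
      constructor <;> simp <;> linarith
    · intro ht
      refine ⟨Real.arccos (t/2), ⟨?_, ?_⟩, ?_⟩
      · exact Real.arccos_pos.mpr (by simp only [mem_Ioo] at ht; linarith [ht.2])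
      · rw [Real.arccos]
        have h := Real.neg_pi_div_two_lt_arcsin (x := t/2)
        simp only [mem_Ioo] at ht
        have := h.mpr (by linarith [ht.1])
        linarith
      · simp only [mem_Ioo] at ht
        show 2 * Real.cos (Real.arccos (t/2)) = t
        rw [Real.cos_arccos (by linarith [ht.1]) (by linarith [ht.2])]
        ring
  have hderiv : ∀ x ∈ Ioo (0:ℝ) π,
      HasDerivWithinAt (fun θ : ℝ => 2 * Real.cos θ) (2 * (-Real.sin x)) (Ioo 0 π) x :=
    fun x _ => ((Real.hasDerivAt_cos x).const_mul 2).hasDerivWithinAt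
  have hinj : InjOn (fun θ : ℝ => 2 * Real.cos θ) (Ioo 0 π) := by
    intro a ha b hb hab
    exact Real.injOn_cos (Ioo_subset_Icc_self ha) (Ioo_subset_Icc_self hb) (by dsimp at hab; linarith)
  rw [intervalIntegral.integral_of_le (by norm_num : (-2:ℝ) ≤ 2),
    intervalIntegral.integral_of_le Real.pi_pos.le,
    MeasureTheory.integral_Ioc_eq_integral_Ioo,
    MeasureTheory.integral_Ioc_eq_integral_Ioo, ← himg,
    integral_image_eq_integral_abs_deriv_smul measurableSet_Ioo hderiv hinj]
  apply MeasureTheory.setIntegral_congr_fun measurableSet_Ioo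
  intro x hx
  have hsin : 0 < Real.sin x := Real.sin_pos_of_pos_of_lt_pi hx.1 hx.2
  have h4 : 4 - (2 * Real.cos x)^2 = (2 * Real.sin x)^2 := by
    nlinarith [Real.sin_sq_add_cos_sq x]
  dsimp
  rw [h4, Real.sqrt_sq (by linarith), abs_of_nonpos (by nlinarith : 2 * -Real.sin x ≤ 0)]
  field_simp

/-- Moments of the `n`-th free eigenfunction, the measure on `[−2,2]` with density
`Tₙ(t/2)/(π √(4−t²))` where `Tₙ` is the Chebyshev polynomial of the first kind:
the `(n+2k)`-th moment is the binomial coefficient `C(n+2k, k)` (the number of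
noncrossing partitions of `n+2k` elements into one class of `n` elements and `k` pairs),
and the `m`-th moment vanishes whenever `m − n` is odd or `m < n`. -/
theorem chebyshev_eigenfunction_moments (n k : ℕ) :
    ((1 / Real.pi) * ∫ t in (-2 : ℝ)..2,
        t ^ (n + 2 * k) * (Polynomial.Chebyshev.T ℝ n).eval (t / 2) /
          Real.sqrt (4 - t ^ 2) = (n + 2 * k).choose k) ∧
    ∀ m : ℕ, (m % 2 ≠ n % 2 ∨ m < n) →
      (1 / Real.pi) * ∫ t in (-2 : ℝ)..2,
          t ^ m * (Polynomial.Chebyshev.T ℝ n).eval (t / 2) /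
            Real.sqrt (4 - t ^ 2) = 0 := by
  have main : ∀ m : ℕ, (1 / Real.pi) * (∫ t in (-2 : ℝ)..2,
      t ^ m * (Polynomial.Chebyshev.T ℝ n).eval (t / 2) / Real.sqrt (4 - t ^ 2))
        = chebMomCoeff m n := by
    intro m
    have h := cheb_cov (fun t => t ^ m * (Polynomial.Chebyshev.T ℝ (n:ℤ)).eval (t / 2))
    rw [h]
    have heq : ∀ x ∈ Set.uIcc (0:ℝ) π,
        (2 * Real.cos x) ^ m * (Polynomial.Chebyshev.T ℝ (n:ℤ)).eval ((2 * Real.cos x) / 2)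
          = 2 ^ m * (Real.cos x ^ m * Real.cos ((n:ℕ) * x)) := by
      intro x _
      rw [show (2 * Real.cos x) / 2 = Real.cos x by ring, Polynomial.Chebyshev.T_real_cos]
      push_cast
      ring
    rw [intervalIntegral.integral_congr heq, intervalIntegral.integral_const_mul,
      cos_pow_integral m n]
    have h2 : (2:ℝ) ^ m ≠ 0 := by positivity
    field_simp
  constructor
  · rw [main (n + 2 * k)]
    unfold chebMomCoeff
    rw [if_pos ⟨by omega, by omega⟩]
    have : (n + 2 * k - n) / 2 = k := by omega
    rw [this]
  · intro m hm
    rw [main m]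
    have : chebMomCoeff m n = 0 := by
      unfold chebMomCoeff
      rw [if_neg (by omega)]
    rw [this]
    norm_num
end

section
/- For every natural number n and every real z with z > 2: ∫_{−2}^{2} (1/(z − t)) · Tₙ(t/2)/(π·√(4 − t²)) dt = (1/√(z² − 4)) · ((z − √(z² − 4))/2)^n. That is, the Cauchy transform of the n-th free eigenfunction 1_{[−2,2]}(t)·Tₙ(t/2)/(π√(4−t²)) dt equals G′(z)·G(z)^n up to sign, where G(z) = (z − √(z²−4))/2 is the Cauchy transform of the standard semicircle law. -/
/-!
Substituting `t = 2 cos θ` turns the integral into `π⁻¹ ∫₀^π cos (nθ) / (z - 2 cos θ) dθ`: the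
Jacobian `2 sin θ` cancels `√(4 - t²)` and `Tₙ (cos θ) = cos (nθ)`. Writing `z = q + q⁻¹` with
`q = (z - √(z² - 4)) / 2 ∈ (0, 1)`, the integrand becomes `q cos (nθ) / (1 - 2q cos θ + q²)`, and
the classical Poisson-kernel integral `∫₀^π cos (nθ) / (1 - 2q cos θ + q²) dθ = π qⁿ / (1 - q²)`
follows for `n = 0` from an explicit primitive and for larger `n` from the recurrence
`cos ((m+1)θ) + cos ((m-1)θ) = 2 cos θ cos (mθ)`.
-/

open Polynomial intervalIntegral

open Real Set

lemma image_mul_cos_Ioo_zero_pi {r : ℝ} (hr : 0 < r) :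
    (fun θ => r * cos θ) '' Ioo 0 π = Ioo (-r) r := by
  have hcos : cos '' Ioo 0 π = Ioo (-1) 1 := by
    simpa using cosPartialHomeomorph.image_source_eq_target
  rw [← image_image (r * ·), hcos, image_mul_left_Ioo hr]
  simp

theorem integral_div_sqrt_sq_sub_sq {r : ℝ} (hr : 0 < r) (f : ℝ → ℝ) :
    ∫ t in -r..r, f t / √(r ^ 2 - t ^ 2) = ∫ θ in 0..π, f (r * cos θ) := by
  have hderiv : ∀ θ ∈ Ioo 0 π, HasDerivWithinAt (fun θ => r * cos θ) (r * -sin θ) (Ioo 0 π) θ :=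
    fun θ _ => ((hasDerivAt_cos θ).const_mul r).hasDerivWithinAt
  have hinj : InjOn (fun θ => r * cos θ) (Ioo 0 π) := fun a ha b hb h =>
    injOn_cos (Ioo_subset_Icc_self ha) (Ioo_subset_Icc_self hb) (mul_left_cancel₀ hr.ne' h)
  have hsubst := MeasureTheory.integral_image_eq_integral_abs_deriv_smul measurableSet_Ioo
    hderiv hinj (fun t => f t / √(r ^ 2 - t ^ 2))
  rw [image_mul_cos_Ioo_zero_pi hr] at hsubst
  rw [integral_of_le (by linarith), integral_of_le pi_pos.le,
    MeasureTheory.integral_Ioc_eq_integral_Ioo, MeasureTheory.integral_Ioc_eq_integral_Ioo, hsubst]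
  refine MeasureTheory.setIntegral_congr_fun measurableSet_Ioo fun θ hθ => ?_
  have hsin : 0 < sin θ := sin_pos_of_pos_of_lt_pi hθ.1 hθ.2
  have hsqrt : √(r ^ 2 - (r * cos θ) ^ 2) = r * sin θ := by
    rw [← sqrt_sq (by positivity : 0 ≤ r * sin θ)]
    congr 1
    linear_combination -r ^ 2 * sin_sq_add_cos_sq θ
  rw [smul_eq_mul, hsqrt, abs_of_neg (by nlinarith)]
  field_simp

theorem integral_cos_natCast_mul_eq_zero {n : ℕ} (hn : n ≠ 0) :
    ∫ θ in 0..π, cos (n * θ) = 0 := by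
  rw [integral_comp_mul_left cos (Nat.cast_ne_zero.2 hn), integral_cos, sin_nat_mul_pi, mul_zero,
    sin_zero, sub_zero, smul_zero]

-- In the names below, `poissonDenom` stands for `1 - 2 * q * cos θ + q ^ 2`.

lemma one_sub_mul_cos_pos {q : ℝ} (hq : |q| < 1) (θ : ℝ) : 0 < 1 - q * cos θ := by
  have : |q * cos θ| < 1 := by
    rw [abs_mul]
    nlinarith [abs_cos_le_one θ, abs_nonneg (cos θ), abs_nonneg q]
  linarith [le_abs_self (q * cos θ)]

lemma poissonDenom_pos {q : ℝ} (hq : |q| < 1) (θ : ℝ) : 0 < 1 - 2 * q * cos θ + q ^ 2 := by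
  have h := one_sub_mul_cos_pos hq θ
  nlinarith [sin_sq_add_cos_sq θ, sq_nonneg (q * sin θ)]

/-- The primitive is `θ + 2 Im (-log (1 - q e^{iθ}))`; unlike the `tan (θ / 2)` substitution it is
smooth on all of `ℝ`. -/
lemma hasDerivAt_poisson_primitive {q : ℝ} (hq : |q| < 1) (θ : ℝ) :
    HasDerivAt (fun θ => θ + 2 * arctan (q * sin θ / (1 - q * cos θ)))
      ((1 - q ^ 2) / (1 - 2 * q * cos θ + q ^ 2)) θ := by
  have hc := one_sub_mul_cos_pos hq θ
  have hD := poissonDenom_pos hq θ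
  have hquot := ((hasDerivAt_sin θ).const_mul q).fun_div
    (((hasDerivAt_cos θ).const_mul q).const_sub 1) hc.ne'
  refine ((hasDerivAt_id' θ).add (hquot.arctan.const_mul 2)).congr_deriv ?_
  field_simp
  linear_combination
    (-q ^ 2 * (1 - 2 * q * cos θ + q ^ 2) - q ^ 2 * (1 - q ^ 2)) * sin_sq_add_cos_sq θ

theorem integral_inv_poissonDenom {q : ℝ} (hq : |q| < 1) :
    ∫ θ in 0..π, 1 / (1 - 2 * q * cos θ + q ^ 2) = π / (1 - q ^ 2) := by
  have hq2 : 1 - q ^ 2 ≠ 0 := by nlinarith [abs_nonneg q, sq_abs q]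
  have hcont : Continuous fun θ => (1 - q ^ 2) / (1 - 2 * q * cos θ + q ^ 2) :=
    continuous_const.div (by fun_prop) fun θ => (poissonDenom_pos hq θ).ne'
  have hftc := integral_eq_sub_of_hasDerivAt (fun θ _ => hasDerivAt_poisson_primitive hq θ)
    (hcont.intervalIntegrable 0 π)
  simp only [sin_pi, sin_zero, mul_zero, zero_div, arctan_zero, add_zero, sub_zero] at hftc
  rw [eq_div_iff hq2, ← intervalIntegral.integral_mul_const]
  exact (integral_congr fun θ _ => by ring).trans hftc

lemma integral_cos_mul_div_poissonDenom_recurrence {q : ℝ} (hq : |q| < 1) (m : ℝ) :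
    q * ((∫ θ in 0..π, cos ((m + 1) * θ) / (1 - 2 * q * cos θ + q ^ 2)) +
        ∫ θ in 0..π, cos ((m - 1) * θ) / (1 - 2 * q * cos θ + q ^ 2)) =
      (1 + q ^ 2) * (∫ θ in 0..π, cos (m * θ) / (1 - 2 * q * cos θ + q ^ 2)) -
        ∫ θ in 0..π, cos (m * θ) := by
  have hcont (a : ℝ) : Continuous fun θ => cos (a * θ) / (1 - 2 * q * cos θ + q ^ 2) :=
    Continuous.div (by fun_prop) (by fun_prop) fun θ => (poissonDenom_pos hq θ).ne'
  rw [← integral_add ((hcont _).intervalIntegrable 0 π) ((hcont _).intervalIntegrable 0 π),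
    ← integral_const_mul, ← integral_const_mul,
    ← integral_sub (((hcont m).intervalIntegrable 0 π).const_mul _)
      ((by fun_prop : Continuous fun θ => cos (m * θ)).intervalIntegrable 0 π)]
  refine integral_congr fun θ _ => ?_
  have hD := (poissonDenom_pos hq θ).ne'
  rw [add_mul, sub_mul, one_mul, cos_add, cos_sub]
  linear_combination -cos (m * θ) * mul_inv_cancel₀ hD

theorem integral_cos_natCast_mul_div_poissonDenom {q : ℝ} (hq : |q| < 1) (n : ℕ) :
    ∫ θ in 0..π, cos (n * θ) / (1 - 2 * q * cos θ + q ^ 2) = π * q ^ n / (1 - q ^ 2) := by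
  rcases eq_or_ne q 0 with rfl | hq0
  · rcases eq_or_ne n 0 with rfl | hn
    · simp
    · simp [hn, integral_cos_natCast_mul_eq_zero hn]
  have hq2 : 1 - q ^ 2 ≠ 0 := by nlinarith [abs_nonneg q, sq_abs q]
  induction n using Nat.twoStepInduction with
  | zero => simpa using integral_inv_poissonDenom hq
  | one =>
    have h := integral_cos_mul_div_poissonDenom_recurrence hq 0
    simp only [zero_add, zero_sub, zero_mul, neg_one_mul, cos_neg, cos_zero, one_mul,
      integral_one, sub_zero] at h
    rw [integral_inv_poissonDenom hq] at h
    simp only [Nat.cast_one, one_mul]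
    generalize ∫ θ in 0..π, cos θ / (1 - 2 * q * cos θ + q ^ 2) = P at h ⊢
    rw [eq_div_iff hq2]
    apply mul_left_cancel₀ (mul_ne_zero two_ne_zero hq0)
    field_simp at h
    linear_combination h
  | more n ih₀ ih₁ =>
    have h := integral_cos_mul_div_poissonDenom_recurrence hq (n + 1)
    have h₀ := integral_cos_natCast_mul_eq_zero n.succ_ne_zero
    push_cast at ih₁ h₀ ⊢
    rw [add_sub_cancel_right, ih₀, ih₁, h₀, add_assoc, one_add_one_eq_two] at h
    generalize ∫ θ in 0..π, cos ((n + 2) * θ) / (1 - 2 * q * cos θ + q ^ 2) = P at h ⊢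
    rw [eq_div_iff hq2]
    apply mul_left_cancel₀ hq0
    field_simp at h
    linear_combination h

theorem integral_cos_natCast_mul_div_sub_two_mul_cos {z : ℝ} (hz : 2 < z) (n : ℕ) :
    ∫ θ in 0..π, cos (n * θ) / (z - 2 * cos θ) =
      π / √(z ^ 2 - 4) * ((z - √(z ^ 2 - 4)) / 2) ^ n := by
  set s := √(z ^ 2 - 4)
  have hs : 0 < s := sqrt_pos.2 (by nlinarith)
  have hs2 : s ^ 2 = z ^ 2 - 4 := sq_sqrt (by nlinarith)
  have hq₀ : 0 < (z - s) / 2 := by nlinarith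
  have hq₁ : (z - s) / 2 < 1 := by nlinarith
  have hvieta : ((z - s) / 2) ^ 2 + 1 = z * ((z - s) / 2) := by linear_combination hs2 / 4
  have hsq : 1 - ((z - s) / 2) ^ 2 = (z - s) / 2 * s := by linear_combination hs2 / 4
  set q := (z - s) / 2
  have hintegrand (θ : ℝ) :
      cos (n * θ) / (z - 2 * cos θ) = q * (cos (n * θ) / (1 - 2 * q * cos θ + q ^ 2)) := by
    rw [show 1 - 2 * q * cos θ + q ^ 2 = q * (z - 2 * cos θ) by linear_combination hvieta,
      mul_div_assoc', mul_div_mul_left _ _ hq₀.ne']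
  rw [integral_congr fun θ _ => hintegrand θ, integral_const_mul,
    integral_cos_natCast_mul_div_poissonDenom (abs_lt.2 ⟨by linarith, hq₁⟩) n, hsq]
  field_simp

/-- The Cauchy transform of the `n`-th free eigenfunction
`1_{[−2,2]}(t) Tₙ(t/2)/(π √(4−t²)) dt`: for `z > 2`,
`∫_{−2}^{2} Tₙ(t/2)/((z−t) π √(4−t²)) dt = (1/√(z²−4)) ((z−√(z²−4))/2)^n`,
i.e. it equals `±G′(z) G(z)^n` where `G(z) = (z−√(z²−4))/2` is the Cauchy transform of
the standard semicircle law. -/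
theorem cauchy_transform_chebyshev_eigenfunction (n : ℕ) (z : ℝ) (hz : 2 < z) :
    ∫ t in (-2 : ℝ)..2,
        (1 / (z - t)) * (Polynomial.Chebyshev.T ℝ n).eval (t / 2) /
          (Real.pi * Real.sqrt (4 - t ^ 2)) =
      (1 / Real.sqrt (z ^ 2 - 4)) * ((z - Real.sqrt (z ^ 2 - 4)) / 2) ^ n := by
  calc _ = ∫ t in -2..2, 1 / (z - t) * (Chebyshev.T ℝ n).eval (t / 2) / π / √(2 ^ 2 - t ^ 2) :=
        integral_congr fun t _ => by rw [show (2 : ℝ) ^ 2 = 4 by norm_num]; ring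
    _ = ∫ θ in 0..π, 1 / (z - 2 * cos θ) * (Chebyshev.T ℝ n).eval (2 * cos θ / 2) / π :=
        integral_div_sqrt_sq_sub_sq two_pos _
    _ = π⁻¹ * ∫ θ in 0..π, cos (n * θ) / (z - 2 * cos θ) := by
        rw [← integral_const_mul]
        refine integral_congr fun θ _ => ?_
        rw [mul_div_cancel_left₀ _ two_ne_zero, Chebyshev.T_real_cos, Int.cast_natCast]
        ring
    _ = _ := by
        rw [integral_cos_natCast_mul_div_sub_two_mul_cos hz]
        field_simp
end

section
/- For every real z with z > 2: ∫_{−2}^{2} √(4 − t²) / (2π·(z − t)) dt = (z − √(z² − 4))/2. That is, the Cauchy transform of the standard Wigner semicircle distribution is G(z) = (z − √(z²−4))/2. -/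
open intervalIntegral

/-!
For `0 < r < z` the integrand `√(r² - t²) / (z - t)` has the elementary antiderivative
`-√(r² - t²) + z arcsin (t / r) + √(z² - r²) arcsin ((r² - z t) / (r (z - t)))`.
As `t` runs over `[-r, r]` the last argument runs from `1` to `-1`, so the fundamental theorem
of calculus gives `∫_{-r}^{r} √(r² - t²) / (z - t) dt = π (z - √(z² - r²))`;
take `r = 2` and divide by `2π`.
-/

open Real Set

lemma hasDerivAt_sqrt_sq_sub_sq {r t : ℝ} (ht : t ^ 2 < r ^ 2) :
    HasDerivAt (fun t => √(r ^ 2 - t ^ 2)) (-t / √(r ^ 2 - t ^ 2)) t := by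
  have hpos : 0 < √(r ^ 2 - t ^ 2) := sqrt_pos.mpr (sub_pos.mpr ht)
  refine (((hasDerivAt_pow 2 t).const_sub (r ^ 2)).sqrt (sub_pos.mpr ht).ne').congr_deriv ?_
  field_simp
  ring

lemma hasDerivAt_arcsin_div {r t : ℝ} (ht : t ∈ Ioo (-r) r) :
    HasDerivAt (fun t => arcsin (t / r)) (1 / √(r ^ 2 - t ^ 2)) t := by
  obtain ⟨hlt, hgt⟩ := ht
  have hr : 0 < r := by linarith
  have hsq : 0 < r ^ 2 - t ^ 2 := by nlinarith
  have hne₁ : t / r ≠ -1 := by rw [Ne, div_eq_iff hr.ne']; linarith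
  have hne₂ : t / r ≠ 1 := by rw [Ne, div_eq_iff hr.ne']; linarith
  refine ((hasDerivAt_arcsin hne₁ hne₂).comp t ((hasDerivAt_id t).div_const r)).congr_deriv ?_
  have : √(1 - (t / r) ^ 2) = √(r ^ 2 - t ^ 2) / r := by
    rw [show 1 - (t / r) ^ 2 = (r ^ 2 - t ^ 2) / r ^ 2 by field_simp, sqrt_div hsq.le,
      sqrt_sq hr.le]
  rw [this]
  have := sqrt_pos.mpr hsq
  field_simp

lemma one_sub_sq_div_eq {r z t : ℝ} (hr : r ≠ 0) (hzt : z ≠ t) :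
    1 - ((r ^ 2 - z * t) / (r * (z - t))) ^ 2 =
      (z ^ 2 - r ^ 2) * (r ^ 2 - t ^ 2) / (r * (z - t)) ^ 2 := by
  have := sub_ne_zero.mpr hzt
  field_simp
  ring

lemma hasDerivAt_arcsin_sq_sub_mul_div {r z t : ℝ} (ht : t ∈ Ioo (-r) r) (hz : r < z) :
    HasDerivAt (fun t => arcsin ((r ^ 2 - z * t) / (r * (z - t))))
      (-√(z ^ 2 - r ^ 2) / ((z - t) * √(r ^ 2 - t ^ 2))) t := by
  obtain ⟨hlt, hgt⟩ := ht
  have hr : 0 < r := by linarith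
  have hzt : 0 < z - t := by linarith
  have hw : 0 < √(z ^ 2 - r ^ 2) := sqrt_pos.mpr (by nlinarith)
  have hs : 0 < √(r ^ 2 - t ^ 2) := sqrt_pos.mpr (by nlinarith)
  have hz't : z ≠ t := by linarith
  have hroot : √(1 - ((r ^ 2 - z * t) / (r * (z - t))) ^ 2) =
      √(z ^ 2 - r ^ 2) * √(r ^ 2 - t ^ 2) / (r * (z - t)) := by
    rw [one_sub_sq_div_eq hr.ne' hz't, ← sqrt_mul (by nlinarith), sqrt_div' _ (by positivity),
      sqrt_sq (by positivity)]
  have hne : 1 - ((r ^ 2 - z * t) / (r * (z - t))) ^ 2 ≠ 0 := by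
    rw [one_sub_sq_div_eq hr.ne' hz't]
    exact (div_pos (mul_pos (by nlinarith) (by nlinarith)) (by positivity)).ne'
  have hne₁ : (r ^ 2 - z * t) / (r * (z - t)) ≠ -1 := by
    intro h; rw [h] at hne; norm_num at hne
  have hne₂ : (r ^ 2 - z * t) / (r * (z - t)) ≠ 1 := by
    intro h; rw [h] at hne; norm_num at hne
  have hquot : HasDerivAt (fun t => (r ^ 2 - z * t) / (r * (z - t)))
      ((-z * (r * (z - t)) - (r ^ 2 - z * t) * -r) / (r * (z - t)) ^ 2) t :=
    (((hasDerivAt_id t).const_mul z).const_sub _ |>.congr_deriv (by simp)).div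
      (((hasDerivAt_id t).const_sub z).const_mul r |>.congr_deriv (by simp)) (by positivity)
  refine ((hasDerivAt_arcsin hne₁ hne₂).comp t hquot).congr_deriv ?_
  rw [hroot]
  have : √(z ^ 2 - r ^ 2) ^ 2 = z ^ 2 - r ^ 2 := sq_sqrt (by nlinarith)
  field_simp
  linear_combination this

noncomputable def semicircleCauchyPrimitive (r z t : ℝ) : ℝ :=
  -√(r ^ 2 - t ^ 2) + z * arcsin (t / r) +
    √(z ^ 2 - r ^ 2) * arcsin ((r ^ 2 - z * t) / (r * (z - t)))

lemma hasDerivAt_semicircleCauchyPrimitive {r z t : ℝ} (ht : t ∈ Ioo (-r) r) (hz : r < z) :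
    HasDerivAt (semicircleCauchyPrimitive r z) (√(r ^ 2 - t ^ 2) / (z - t)) t := by
  have hsq : t ^ 2 < r ^ 2 := by nlinarith [ht.1, ht.2]
  have hzt : 0 < z - t := by linarith [ht.2]
  have hs : 0 < √(r ^ 2 - t ^ 2) := sqrt_pos.mpr (sub_pos.mpr hsq)
  have hs2 : √(r ^ 2 - t ^ 2) ^ 2 = r ^ 2 - t ^ 2 := sq_sqrt (sub_pos.mpr hsq).le
  have hw2 : √(z ^ 2 - r ^ 2) ^ 2 = z ^ 2 - r ^ 2 := sq_sqrt (by nlinarith [ht.1, ht.2])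
  refine ((((hasDerivAt_sqrt_sq_sub_sq hsq).neg).add
    ((hasDerivAt_arcsin_div ht).const_mul z)).add
    ((hasDerivAt_arcsin_sq_sub_mul_div ht hz).const_mul _)).congr_deriv ?_
  field_simp
  linear_combination -hw2 - hs2

lemma continuousOn_semicircleCauchyPrimitive {r z : ℝ} (hr : 0 < r) (hz : r < z) :
    ContinuousOn (semicircleCauchyPrimitive r z) (Icc (-r) r) := by
  have hzt : ∀ t ∈ Icc (-r) r, r * (z - t) ≠ 0 := fun t ht =>
    (mul_pos hr (by linarith [ht.2])).ne'
  unfold semicircleCauchyPrimitive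
  refine (by fun_prop : Continuous _).continuousOn.add
    ((continuous_const.mul continuous_arcsin).comp_continuousOn ?_)
  exact ContinuousOn.div (by fun_prop) (by fun_prop) hzt

lemma semicircleCauchyPrimitive_sub {r z : ℝ} (hr : 0 < r) (hz : r < z) :
    semicircleCauchyPrimitive r z r - semicircleCauchyPrimitive r z (-r) =
      π * (z - √(z ^ 2 - r ^ 2)) := by
  have h₁ : (r ^ 2 - z * r) / (r * (z - r)) = -1 := by
    rw [div_eq_iff (by nlinarith)]; ring
  have h₂ : (r ^ 2 - z * -r) / (r * (z - -r)) = 1 := by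
    rw [div_eq_iff (by nlinarith)]; ring
  simp only [semicircleCauchyPrimitive, h₁, h₂, div_self hr.ne', neg_div, arcsin_one,
    arcsin_neg, neg_sq, sub_self, sqrt_zero]
  ring

theorem integral_sqrt_sq_sub_sq_div_sub {r z : ℝ} (hr : 0 < r) (hz : r < z) :
    ∫ t in -r..r, √(r ^ 2 - t ^ 2) / (z - t) = π * (z - √(z ^ 2 - r ^ 2)) := by
  have hzt : ∀ t ∈ uIcc (-r) r, z - t ≠ 0 := fun t ht => by
    rw [uIcc_of_le (by linarith)] at ht
    linarith [ht.2]
  rw [integral_eq_sub_of_hasDerivAt_of_le (by linarith)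
    (continuousOn_semicircleCauchyPrimitive hr hz)
    (fun t ht => hasDerivAt_semicircleCauchyPrimitive ht hz)
    ((ContinuousOn.div (by fun_prop) (by fun_prop) hzt).intervalIntegrable),
    semicircleCauchyPrimitive_sub hr hz]

/-- The Cauchy transform of the standard Wigner semicircle distribution (the probability
measure on `[−2,2]` with density `√(4−t²)/(2π)`): for `z > 2`,
`∫_{−2}^{2} √(4−t²)/(2π(z−t)) dt = (z − √(z²−4))/2`. -/
theorem cauchy_transform_semicircle (z : ℝ) (hz : 2 < z) :
    ∫ t in (-2 : ℝ)..2, Real.sqrt (4 - t ^ 2) / (2 * Real.pi * (z - t)) =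
      (z - Real.sqrt (z ^ 2 - 4)) / 2 := by
  have h := integral_sqrt_sq_sub_sq_div_sub two_pos hz
  norm_num at h
  simp_rw [mul_comm (2 * π), ← div_div, intervalIntegral.integral_div, h]
  field_simp
end

section
/- For every natural number k: ∫_{−2}^{2} t^{2k} · √(4 − t²)/(2π) dt = catalan(k), and ∫_{−2}^{2} t^{2k+1} · √(4 − t²)/(2π) dt = 0. That is, the moments of the standard Wigner semicircle distribution are the Catalan numbers. -/
/-!
Substituting `t = r sin θ` turns `∫_{-r}^{r} tⁿ √(r² - t²) dt` into `r^(n+2) ∫ sinⁿ θ cos² θ dθ`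
over `[-π/2, π/2]`, and writing `cos² = 1 - sin²` reduces this to the Wallis integrals
`Wₙ = ∫_{-π/2}^{π/2} sinⁿ`. The boundary terms of the usual reduction formula vanish at `±π/2`,
so `W_{n+2} = (n+1)/(n+2) Wₙ` with `W₀ = π`, `W₁ = 0`. Hence the odd moments vanish,
`W_{2k} = π (2k choose k) / 4^k`, and the `2k`-th moment is `(2k choose k) / (k + 1)`.
-/

open intervalIntegral

open Real

theorem integral_sin_pow_add_two_neg_pi_div_two (n : ℕ) :
    ∫ x in -(π / 2)..π / 2, sin x ^ (n + 2) =
      (n + 1) / (n + 2) * ∫ x in -(π / 2)..π / 2, sin x ^ n := by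
  simp [integral_sin_pow]

theorem integral_sin_pow_odd_neg_pi_div_two (k : ℕ) :
    ∫ x in -(π / 2)..π / 2, sin x ^ (2 * k + 1) = 0 := by
  induction k with
  | zero => simp
  | succ k ih =>
    rw [show 2 * (k + 1) + 1 = 2 * k + 1 + 2 by ring, integral_sin_pow_add_two_neg_pi_div_two, ih,
      mul_zero]

theorem integral_sin_pow_even_neg_pi_div_two (k : ℕ) :
    ∫ x in -(π / 2)..π / 2, sin x ^ (2 * k) = π * k.centralBinom / 4 ^ k := by
  induction k with
  | zero => simp
  | succ k ih =>
    have hrec : ((k : ℝ) + 1) * (k + 1).centralBinom = 2 * (2 * k + 1) * k.centralBinom := by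
      exact_mod_cast Nat.succ_mul_centralBinom_succ k
    rw [show 2 * (k + 1) = 2 * k + 2 by ring, integral_sin_pow_add_two_neg_pi_div_two, ih,
      pow_succ]
    push_cast
    field_simp
    linear_combination (-2) * hrec

theorem integral_sin_pow_mul_cos_sq_neg_pi_div_two (n : ℕ) :
    ∫ x in -(π / 2)..π / 2, sin x ^ n * cos x ^ 2 =
      (∫ x in -(π / 2)..π / 2, sin x ^ n) / (n + 2) := by
  have hsplit (x : ℝ) : sin x ^ n * cos x ^ 2 = sin x ^ n - sin x ^ (n + 2) := by
    rw [cos_sq']; ring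
  simp_rw [hsplit]
  rw [integral_sub
    ((by fun_prop : Continuous fun x => sin x ^ n).intervalIntegrable _ _)
    ((by fun_prop : Continuous fun x => sin x ^ (n + 2)).intervalIntegrable _ _),
    integral_sin_pow_add_two_neg_pi_div_two]
  field_simp
  ring

theorem integral_pow_mul_sqrt_sq_sub_sq {r : ℝ} (hr : 0 ≤ r) (n : ℕ) :
    ∫ t in -r..r, t ^ n * √(r ^ 2 - t ^ 2) =
      r ^ (n + 2) * ∫ x in -(π / 2)..π / 2, sin x ^ n * cos x ^ 2 := by
  have hderiv : ∀ x ∈ Set.uIcc (-(π / 2)) (π / 2),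
      HasDerivAt (fun x => r * sin x) (r * cos x) x :=
    fun x _ => (hasDerivAt_sin x).const_mul r
  have hsubst := integral_comp_mul_deriv hderiv (by fun_prop)
    (g := fun t => t ^ n * √(r ^ 2 - t ^ 2)) (by fun_prop)
  simp only [sin_neg, sin_pi_div_two, mul_neg, mul_one, Function.comp_apply] at hsubst
  rw [← hsubst, ← integral_const_mul]
  refine integral_congr fun x hx => ?_
  rw [Set.uIcc_of_le (by linarith [pi_pos])] at hx
  have hsqrt : √(r ^ 2 - (r * sin x) ^ 2) = r * cos x := by
    rw [show r ^ 2 - (r * sin x) ^ 2 = (r * cos x) ^ 2 by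
      linear_combination (-r ^ 2) * sin_sq_add_cos_sq x]
    exact sqrt_sq (mul_nonneg hr (cos_nonneg_of_mem_Icc hx))
  rw [hsqrt]
  ring

/-- The moments of the standard Wigner semicircle distribution (density `√(4−t²)/(2π)`
on `[−2,2]`) are the Catalan numbers: the `2k`-th moment is `catalan k` and the odd
moments vanish. -/
theorem semicircle_moments (k : ℕ) :
    (∫ t in (-2 : ℝ)..2, t ^ (2 * k) * Real.sqrt (4 - t ^ 2) / (2 * Real.pi) =
      catalan k) ∧
    ∫ t in (-2 : ℝ)..2, t ^ (2 * k + 1) * Real.sqrt (4 - t ^ 2) / (2 * Real.pi) = 0 := by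
  have hmoment (n : ℕ) : ∫ t in (-2 : ℝ)..2, t ^ n * √(4 - t ^ 2) =
      2 ^ (n + 2) / (n + 2) * ∫ x in -(π / 2)..π / 2, sin x ^ n := by
    rw [show (4 : ℝ) = 2 ^ 2 by norm_num, integral_pow_mul_sqrt_sq_sub_sq zero_le_two,
      integral_sin_pow_mul_cos_sq_neg_pi_div_two]
    ring
  have hcatalan : ((k : ℝ) + 1) * catalan k = k.centralBinom := by
    exact_mod_cast succ_mul_catalan_eq_centralBinom k
  refine ⟨?_, ?_⟩
  · rw [integral_div, hmoment, integral_sin_pow_even_neg_pi_div_two, pow_add, pow_mul,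
      show (2 : ℝ) ^ 2 = 4 by norm_num]
    push_cast
    field_simp
    linear_combination (-4) * hcatalan
  · rw [integral_div, hmoment, integral_sin_pow_odd_neg_pi_div_two]
    simp
end
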